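/- Let x, y, x̃ₜ, ỹₜ ∈ ℝ with (x̃ₜ - x)² < (ỹₜ - y)². Let r > 0, wₜ = 1 and vₜ > 1 with 2r·vₜ < 1. Define the gradient descent updates x̃_{t+1} = x̃ₜ - 2r·wₜ·(x̃ₜ - x) and ỹ_{t+1} = ỹₜ - 2r·vₜ·(ỹₜ - y). Then the gap between prediction errors strictly decreases: (ỹ_{t+1} - y)² - (x̃_{t+1} - x)² < (ỹₜ - y)² - (x̃ₜ - x)², and moreover (ỹ_{t+1} - y)² - (x̃_{t+1} - x)² < (1 - 2r·wₜ)² · ((ỹₜ - y)² - (x̃ₜ - x)²). -/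
import Mathlib

theorem stmt_2 (x y xt yt r w v : ℝ)
    (herr : (xt - x) ^ 2 < (yt - y) ^ 2)
    (hr : 0 < r) (hw : w = 1) (hv : 1 < v) (hstep : 2 * r * v < 1)
    (xt1 yt1 : ℝ)
    (hx1 : xt1 = xt - 2 * r * w * (xt - x))
    (hy1 : yt1 = yt - 2 * r * v * (yt - y)) :
    (yt1 - y) ^ 2 - (xt1 - x) ^ 2 < (yt - y) ^ 2 - (xt - x) ^ 2 ∧
    (yt1 - y) ^ 2 - (xt1 - x) ^ 2 <
      (1 - 2 * r * w) ^ 2 * ((yt - y) ^ 2 - (xt - x) ^ 2) := by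
  subst hw hx1 hy1
  have h1 : 2 * r < 2 * r * v := by nlinarith
  have h2 : (0:ℝ) < 1 - 2 * r * v := by linarith
  have h3 : (1 - 2 * r * v) ^ 2 < (1 - 2 * r) ^ 2 := by nlinarith
  have h4 : (1 - 2 * r) ^ 2 < 1 := by nlinarith
  have key : (yt - 2 * r * v * (yt - y) - y) ^ 2 - (xt - 2 * r * 1 * (xt - x) - x) ^ 2
      < (1 - 2 * r * 1) ^ 2 * ((yt - y) ^ 2 - (xt - x) ^ 2) := by
    have e1 : (yt - 2 * r * v * (yt - y) - y) ^ 2 = (1 - 2 * r * v) ^ 2 * (yt - y) ^ 2 := by ring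
    have e2 : (xt - 2 * r * 1 * (xt - x) - x) ^ 2 = (1 - 2 * r * 1) ^ 2 * (xt - x) ^ 2 := by ring
    rw [e1, e2]
    nlinarith [sq_nonneg (yt - y)]
  refine ⟨?_, key⟩
  nlinarith [key]
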